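/- If μ is an F-invariant Borel probability measure on X and c is measurable, then R_low ∘ F = R_low and R_up ∘ F = R_up μ-almost everywhere; if moreover the system (X, F, μ) is ergodic, then there exist constants r_0, r_1 ∈ [0,∞] such that R_low(x) = r_0 and R_up(x) = r_1 for μ-almost every x ∈ X. -/

import Mathlib

open Filter
open scoped ENNReal

noncomputable section

/-- The `n`-cylinder `C_{x,n}` of `x` for the coding `c` of the system `(X, F)`
(`C_{x,0} = X` by convention). -/
def cylG {X A : Type*} (F : X → X) (c : X → A) (x : X) (n : ℕ) : Set X :=
  {y | ∀ k < n, c (F^[k] y) = c (F^[k] x)}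

/-- The Poincaré return time `τ(M) = inf {k ≥ 1 | F^k(M) ∩ M ≠ ∅} ∈ ℕ ∪ {∞}`. -/
def tauG {X : Type*} (F : X → X) (M : Set X) : ℕ∞ :=
  sInf {e : ℕ∞ | ∃ k : ℕ, e = (k : ℕ∞) ∧ 1 ≤ k ∧ (F^[k] '' M ∩ M).Nonempty}

/-- The lower local return rate `R_low(x) = liminf_n τ(C_{x,n})/n`, valued in `[0,∞]`. -/
def RlowG {X A : Type*} (F : X → X) (c : X → A) (x : X) : ℝ≥0∞ :=
  liminf (fun n : ℕ => (tauG F (cylG F c x n) : ℝ≥0∞) / (n : ℝ≥0∞)) atTop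

/-- The upper local return rate `R_up(x) = limsup_n τ(C_{x,n})/n`, valued in `[0,∞]`. -/
def RupG {X A : Type*} (F : X → X) (c : X → A) (x : X) : ℝ≥0∞ :=
  limsup (fun n : ℕ => (tauG F (cylG F c x n) : ℝ≥0∞) / (n : ℝ≥0∞)) atTop

open MeasureTheory
/-!
Since `F` maps `C_{x,n+1}` into `C_{F x,n}` and commutes with its own iterates,
`τ(C_{F x,n}) ≤ τ(C_{x,n+1})`; as `(n+1)/n → 1` this gives `R(F x) ≤ R(x)` for every `x`,
for both rates. A measurable function `g` with `g ∘ F ≤ g` is a.e. invariant under a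
measure-preserving map of a finite measure space: each superlevel set `{t < g}` contains its
preimage, which has the same measure. Ergodicity then makes the invariant rates a.e. constant.
-/

open Function Set Topology

section ReturnTime

variable {X A : Type*}

theorem mapsTo_cylG_succ (F : X → X) (c : X → A) (x : X) (n : ℕ) :
    MapsTo F (cylG F c x (n + 1)) (cylG F c (F x) n) := fun y hy k hk => by
  simpa only [iterate_succ_apply] using hy (k + 1) (by omega)

theorem tauG_le_of_mapsTo {F g : X → X} {M N : Set X} (hg : Function.Commute g F)
    (h : MapsTo g M N) : tauG F N ≤ tauG F M := by
  refine sInf_le_sInf ?_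
  rintro e ⟨k, rfl, hk, _, ⟨y, hy, rfl⟩, hFy⟩
  exact ⟨k, rfl, hk, g (F^[k] y), ⟨g y, h hy, ((hg.iterate_right k).eq y).symm⟩, h hFy⟩

theorem tauG_cylG_apply_le (F : X → X) (c : X → A) (x : X) (n : ℕ) :
    tauG F (cylG F c (F x) n) ≤ tauG F (cylG F c x (n + 1)) :=
  tauG_le_of_mapsTo (Function.Commute.refl F) (mapsTo_cylG_succ F c x n)

end ReturnTime

namespace ENNReal

theorem tendsto_one_add_inv_natCast_nhds_one :
    Tendsto (fun n : ℕ => 1 + (n : ℝ≥0∞)⁻¹) atTop (𝓝 1) := by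
  simpa using tendsto_const_nhds.add ENNReal.tendsto_inv_nat_nhds_zero

theorem div_natCast_eq_one_add_inv_mul_div_succ (a : ℝ≥0∞) (n : ℕ) :
    a / n = (1 + (n : ℝ≥0∞)⁻¹) * (a / (n + 1 : ℕ)) := by
  rcases eq_or_ne n 0 with rfl | hn
  · simp [div_eq_mul_inv, mul_comm]
  have hsucc : ((n + 1 : ℕ) : ℝ≥0∞) * ((n + 1 : ℕ) : ℝ≥0∞)⁻¹ = 1 :=
    ENNReal.mul_inv_cancel (by simp) (by simp)
  have hn' : (n : ℝ≥0∞) * (n : ℝ≥0∞)⁻¹ = 1 := ENNReal.mul_inv_cancel (by simpa) (by simp)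
  calc a / n = a * (n : ℝ≥0∞)⁻¹ * (((n + 1 : ℕ) : ℝ≥0∞) * ((n + 1 : ℕ) : ℝ≥0∞)⁻¹) := by
        rw [hsucc, mul_one, div_eq_mul_inv]
    _ = (n * (n : ℝ≥0∞)⁻¹ + (n : ℝ≥0∞)⁻¹) * (a * ((n + 1 : ℕ) : ℝ≥0∞)⁻¹) := by
        push_cast; ring
    _ = (1 + (n : ℝ≥0∞)⁻¹) * (a / (n + 1 : ℕ)) := by rw [hn', div_eq_mul_inv]

variable (v : ℕ → ℝ≥0∞)

theorem succ_div_natCast_eq_mul :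
    (fun n : ℕ => v (n + 1) / n) =
      (fun n : ℕ => 1 + (n : ℝ≥0∞)⁻¹) * fun n => v (n + 1) / (n + 1 : ℕ) :=
  funext fun n => div_natCast_eq_one_add_inv_mul_div_succ (v (n + 1)) n

theorem liminf_succ_div_natCast_le :
    liminf (fun n : ℕ => v (n + 1) / n) atTop ≤ liminf (fun n : ℕ => v n / n) atTop := by
  have hlim := tendsto_one_add_inv_natCast_nhds_one.limsup_eq
  rw [succ_div_natCast_eq_mul, ← liminf_nat_add (fun n : ℕ => v n / n) 1]
  refine (liminf_mul_le (.inl ?_) (.inl ?_)).trans_eq ?_ <;> simp [hlim]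

theorem limsup_succ_div_natCast_le :
    limsup (fun n : ℕ => v (n + 1) / n) atTop ≤ limsup (fun n : ℕ => v n / n) atTop := by
  have hlim := tendsto_one_add_inv_natCast_nhds_one.limsup_eq
  rw [succ_div_natCast_eq_mul, ← limsup_nat_add (fun n : ℕ => v n / n) 1]
  refine (limsup_mul_le' (.inl ?_) (.inl ?_)).trans_eq ?_ <;> simp [hlim]

end ENNReal

section Rates

variable {X A : Type*}

theorem RlowG_apply_le (F : X → X) (c : X → A) (x : X) : RlowG F c (F x) ≤ RlowG F c x :=
  calc RlowG F c (F x)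
      ≤ liminf (fun n : ℕ => (tauG F (cylG F c x (n + 1)) : ℝ≥0∞) / n) atTop :=
        liminf_le_liminf <| .of_forall fun n =>
          ENNReal.div_le_div_right (mod_cast tauG_cylG_apply_le F c x n) _
    _ ≤ RlowG F c x := ENNReal.liminf_succ_div_natCast_le fun n => tauG F (cylG F c x n)

theorem RupG_apply_le (F : X → X) (c : X → A) (x : X) : RupG F c (F x) ≤ RupG F c x :=
  calc RupG F c (F x)
      ≤ limsup (fun n : ℕ => (tauG F (cylG F c x (n + 1)) : ℝ≥0∞) / n) atTop :=
        limsup_le_limsup <| .of_forall fun n =>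
          ENNReal.div_le_div_right (mod_cast tauG_cylG_apply_le F c x n) _
    _ ≤ RupG F c x := ENNReal.limsup_succ_div_natCast_le fun n => tauG F (cylG F c x n)

variable [MeasurableSpace X] [MeasurableSpace A] [Countable A] [MeasurableSingletonClass A]
  {F : X → X} {c : X → A}

theorem measurable_tauG_cylG (hF : Measurable F) (hc : Measurable c) (n : ℕ) :
    Measurable fun x => (tauG F (cylG F c x n) : ℝ≥0∞) := by
  let word : X → Fin n → A := fun x k => c (F^[k] x)
  have hword : Measurable word := measurable_pi_lambda _ fun k => hc.comp (hF.iterate k)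
  have hcyl : ∀ x, cylG F c x n = {y | word y = word x} := fun x => by
    ext y
    simp only [cylG, funext_iff, word]
    exact ⟨fun h k => h k k.isLt, fun h k hk => h ⟨k, hk⟩⟩
  simp only [hcyl]
  exact (measurable_of_countable fun w => (tauG F {y | word y = w} : ℝ≥0∞)).comp hword

theorem measurable_RlowG (hF : Measurable F) (hc : Measurable c) : Measurable (RlowG F c) :=
  .liminf fun n => (measurable_tauG_cylG hF hc n).div_const _

theorem measurable_RupG (hF : Measurable F) (hc : Measurable c) : Measurable (RupG F c) :=
  .limsup fun n => (measurable_tauG_cylG hF hc n).div_const _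

end Rates

namespace MeasureTheory.MeasurePreserving

variable {X : Type*} [MeasurableSpace X] {μ : Measure X} [IsFiniteMeasure μ] {F : X → X}

theorem preimage_ae_eq_of_preimage_subset (hF : MeasurePreserving F μ μ) {s : Set X}
    (hs : MeasurableSet s) (hsub : F ⁻¹' s ⊆ s) : F ⁻¹' s =ᵐ[μ] s :=
  ae_eq_of_subset_of_measure_ge hsub (hF.measure_preimage hs.nullMeasurableSet).ge
    (hF.measurable hs).nullMeasurableSet (measure_ne_top μ s)

theorem ae_comp_eq_of_comp_le (hF : MeasurePreserving F μ μ) {g : X → ℝ≥0∞}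
    (hg : Measurable g) (hle : ∀ x, g (F x) ≤ g x) : ∀ᵐ x ∂μ, g (F x) = g x := by
  have hlevel : ∀ q : ℚ, ∀ᵐ x ∂μ, (ENNReal.ofReal q < g (F x) ↔ ENNReal.ofReal q < g x) :=
    fun q => (hF.preimage_ae_eq_of_preimage_subset (measurableSet_lt measurable_const hg)
      fun x hx => hx.trans_le (hle x)).mem_iff
  filter_upwards [ae_all_iff.2 hlevel] with x hx
  refine (hle x).antisymm (le_of_not_gt fun hlt => ?_)
  obtain ⟨q, -, hq₁, hq₂⟩ := ENNReal.lt_iff_exists_rat_btwn.1 hlt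
  exact hq₁.not_gt ((hx q).2 hq₂)

end MeasureTheory.MeasurePreserving

/-- If `μ` is an `F`-invariant Borel probability measure on `X` and the
coding `c` is measurable, then `R_low ∘ F = R_low` and `R_up ∘ F = R_up` `μ`-a.e.;
if moreover `(X, F, μ)` is ergodic, then there are constants `r₀, r₁ ∈ [0,∞]` with
`R_low(x) = r₀` and `R_up(x) = r₁` for `μ`-a.e. `x`. -/
theorem statement19 {X A : Type*} [MeasurableSpace X] [MeasurableSpace A] [Finite A]
    [MeasurableSingletonClass A]
    (F : X → X) (c : X → A) (μ : Measure X) [IsProbabilityMeasure μ]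
    (hF : MeasurePreserving F μ μ) (hc : Measurable c) :
    (∀ᵐ x ∂μ, RlowG F c (F x) = RlowG F c x ∧ RupG F c (F x) = RupG F c x) ∧
    (Ergodic F μ →
      ∃ r₀ r₁ : ℝ≥0∞, ∀ᵐ x ∂μ, RlowG F c x = r₀ ∧ RupG F c x = r₁) := by
  have hlow_meas := measurable_RlowG hF.measurable hc
  have hup_meas := measurable_RupG hF.measurable hc
  have hlow := hF.ae_comp_eq_of_comp_le hlow_meas (RlowG_apply_le F c)
  have hup := hF.ae_comp_eq_of_comp_le hup_meas (RupG_apply_le F c)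
  refine ⟨hlow.and hup, fun hE => ?_⟩
  obtain ⟨r₀, hr₀⟩ := hE.ae_eq_const_of_ae_eq_comp₀ hlow_meas.nullMeasurable hlow
  obtain ⟨r₁, hr₁⟩ := hE.ae_eq_const_of_ae_eq_comp₀ hup_meas.nullMeasurable hup
  exact ⟨r₀, r₁, hr₀.and hr₁⟩
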